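/- For every smooth o-symmetric convex domain K₀ in ℝ², the maximum cardinality of a separable point set on ∂K₀ is exactly 4. -/

import Mathlib

/-!
A set `S ⊆ ∂K` is separable exactly when `F y x ≤ 0 < F x x` for distinct `x, y ∈ S`, since
`F y x ≤ F y y` holds on all of `K`.

Four points: choose `a, b ∈ K` maximising the determinant `det a b`. Then `a` maximises the
functional `det · b` on `K` and `b` maximises `det a ·`, so by smoothness `F a` and `F b` are
positive multiples of these functionals, whence `F a b = F b a = 0`. As `F (-p) = -F p`, the
points `±a, ±b` are separable.

No five points: by Cramer's rule `det x z • y = det y z • x + det x y • z`, a point `p v` with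
`det (p u) (p v) ≥ 0`, `det (p v) (p w) ≥ 0` and `det (p u) (p w) > 0` lies in the cone spanned by
`p u` and `p w`, where its own functional is nonpositive. Two of the five points cannot be
parallel: they would be antipodal, so the functionals of the other three would all vanish on their
line, i.e. be multiples `s • det q` whose coefficients `s` are pairwise of opposite signs. Hence
orientation is a tournament on any four of the points, and a transitive triple `u → v → w` of it
gives such a cone.
-/

open scoped Pointwise

local notation "ℝ²" => EuclideanSpace ℝ (Fin 2)

section Symmetric

variable {E : Type*} [TopologicalSpace E] [InvolutiveNeg E] [ContinuousNeg E] {K : Set E} {p : E}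

theorem neg_mem_interior_of_eq_neg (hsymm : K = -K) (hp : p ∈ interior K) :
    -p ∈ interior K := by
  have hneg := (Homeomorph.neg E).image_interior K
  simp only [Homeomorph.coe_neg, Set.image_neg_eq_neg, ← hsymm] at hneg
  exact hneg ▸ Set.neg_mem_neg.mpr hp

theorem neg_mem_frontier_of_eq_neg (hsymm : K = -K) (hp : p ∈ frontier K) :
    -p ∈ frontier K := by
  have hneg := (Homeomorph.neg E).image_frontier K
  simp only [Homeomorph.coe_neg, Set.image_neg_eq_neg, ← hsymm] at hneg
  exact hneg ▸ Set.neg_mem_neg.mpr hp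

end Symmetric

theorem Convex.zero_mem_interior_of_eq_neg {E : Type*} [AddCommGroup E] [TopologicalSpace E]
    [IsTopologicalAddGroup E] [Module ℝ E] [ContinuousSMul ℝ E] {K : Set E} (hconv : Convex ℝ K)
    (hint : (interior K).Nonempty) (hsymm : K = -K) : (0 : E) ∈ interior K := by
  obtain ⟨z, hz⟩ := hint
  simpa using hconv.interior hz (neg_mem_interior_of_eq_neg hsymm hz) (a := 1 / 2) (b := 1 / 2)
    (by norm_num) (by norm_num) (by norm_num)

section LinearFunctional

variable {E : Type*} [NormedAddCommGroup E] [NormedSpace ℝ E] {K : Set E} {f : E →L[ℝ] ℝ}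
  {a : E}

theorem ContinuousLinearMap.eq_zero_of_forall_le_of_mem_interior (hmax : ∀ x ∈ K, f x ≤ f a)
    (ha : a ∈ interior K) : f = 0 :=
  ((isMaxOn_iff.mpr hmax).isLocalMax (mem_interior_iff_mem_nhds.mp ha)).hasFDerivAt_eq_zero
    f.hasFDerivAt

theorem ContinuousLinearMap.mem_frontier_of_forall_le (hK : IsClosed K) (hf : f ≠ 0)
    (ha : a ∈ K) (hmax : ∀ x ∈ K, f x ≤ f a) : a ∈ frontier K := by
  rw [hK.frontier_eq]
  exact ⟨ha, fun hint => hf (f.eq_zero_of_forall_le_of_mem_interior hmax hint)⟩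

theorem ContinuousLinearMap.apply_pos_of_forall_le (h0 : (0 : E) ∈ interior K) (hf : f ≠ 0)
    (hmax : ∀ x ∈ K, f x ≤ f a) : 0 < f a := by
  by_contra! ha
  exact hf (f.eq_zero_of_forall_le_of_mem_interior (a := 0)
    (fun x hx => by simpa using (hmax x hx).trans ha) h0)

end LinearFunctional

section SupportFunctional

variable {E : Type*} [NormedAddCommGroup E] [NormedSpace ℝ E] {K : Set E}
  {F : E → E →L[ℝ] ℝ} {p : E}

theorem supportFunctional_eq_inv_norm_smul
    (hsmooth : ∀ p ∈ frontier K, ∀ g : E →L[ℝ] ℝ, ‖g‖ = 1 → (∀ x ∈ K, g x ≤ g p) → g = F p)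
    (hp : p ∈ frontier K) {g : E →L[ℝ] ℝ} (hg : g ≠ 0) (hgp : ∀ x ∈ K, g x ≤ g p) :
    F p = ‖g‖⁻¹ • g := by
  refine (hsmooth p hp _ ?_ fun x hx => ?_).symm
  · rw [norm_smul, norm_inv, norm_norm, inv_mul_cancel₀ (norm_ne_zero_iff.mpr hg)]
  · simp only [smul_apply, smul_eq_mul]
    exact mul_le_mul_of_nonneg_left (hgp x hx) (by positivity)

theorem supportFunctional_neg (hsymm : K = -K) (hFnorm : ∀ p ∈ frontier K, ‖F p‖ = 1)
    (hFsupp : ∀ p ∈ frontier K, ∀ x ∈ K, F p x ≤ F p p)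
    (hsmooth : ∀ p ∈ frontier K, ∀ g : E →L[ℝ] ℝ, ‖g‖ = 1 → (∀ x ∈ K, g x ≤ g p) → g = F p)
    (hp : p ∈ frontier K) : F (-p) = -F p := by
  refine (hsmooth (-p) (neg_mem_frontier_of_eq_neg hsymm hp) (-F p)
    (by rw [norm_neg, hFnorm p hp]) fun x hx => ?_).symm
  rw [hsymm] at hx
  simpa using hFsupp p hp (-x) hx

end SupportFunctional

section ConjugatePair

variable {E : Type*} [AddCommGroup E] [Module ℝ E] [TopologicalSpace E]
  {F : E → E →L[ℝ] ℝ} {a b : E}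

theorem apply_nonpos_of_mem_conjugate_pair (hFa : F (-a) = -F a) (hFb : F (-b) = -F b)
    (ha : 0 < F a a) (hb : 0 < F b b) (hab : F a b = 0) (hba : F b a = 0) {x y : E}
    (hx : x ∈ ({a, -a, b, -b} : Set E)) (hy : y ∈ ({a, -a, b, -b} : Set E)) (hxy : x ≠ y) :
    F y x ≤ 0 := by
  simp only [Set.mem_insert_iff, Set.mem_singleton_iff] at hx hy
  rcases hx with rfl | rfl | rfl | rfl <;> rcases hy with rfl | rfl | rfl | rfl <;>
    first
      | exact absurd rfl hxy
      | simp only [hFa, hFb, map_neg, neg_apply, neg_neg, hab, hba]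
        linarith

theorem ncard_conjugate_pair (ha : 0 < F a a) (hb : 0 < F b b) (hab : F a b = 0) :
    ({a, -a, b, -b} : Set E).ncard = 4 := by
  have hne : ∀ {x y : E} (g : E →L[ℝ] ℝ), g x ≠ g y → x ≠ y := fun g h e => h (congrArg g e)
  rw [Set.ncard_insert_of_notMem, Set.ncard_insert_of_notMem, Set.ncard_pair]
  · exact hne (F b) (by simp only [map_neg]; linarith)
  · simp only [Set.mem_insert_iff, Set.mem_singleton_iff, not_or, neg_inj]
    exact ⟨hne (F a) (by simp only [map_neg, hab]; linarith), hne (F a) (by rw [hab]; linarith)⟩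
  · simp only [Set.mem_insert_iff, Set.mem_singleton_iff, not_or]
    exact ⟨hne (F a) (by simp only [map_neg]; linarith), hne (F a) (by rw [hab]; linarith),
      hne (F a) (by simp only [map_neg, hab]; linarith)⟩

end ConjugatePair

theorem Fin.exists_transitive_triple (r : Fin 4 → Fin 4 → Prop)
    (hr : ∀ x y, x ≠ y → r x y ∨ r y x) : ∃ u v w, r u v ∧ r v w ∧ r u w := by
  -- two of the three edges at `0` point the same way; the edge joining their other ends
  -- completes a transitive triple
  have h12 := hr 1 2 (by decide)
  have h13 := hr 1 3 (by decide)
  have h23 := hr 2 3 (by decide)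
  rcases hr 0 1 (by decide) with h1 | h1 <;> rcases hr 0 2 (by decide) with h2 | h2 <;>
    rcases hr 0 3 (by decide) with h3 | h3 <;> grind

namespace Plane

noncomputable def det : ℝ² →L[ℝ] ℝ² →L[ℝ] ℝ :=
  (EuclideanSpace.proj 0).smulRight (EuclideanSpace.proj 1) -
    (EuclideanSpace.proj 1).smulRight (EuclideanSpace.proj 0)

@[simp]
theorem det_apply (x y : ℝ²) : det x y = x 0 * y 1 - x 1 * y 0 := by
  simp [det]

theorem det_self (x : ℝ²) : det x x = 0 := by
  simp [mul_comm]

theorem det_swap (x y : ℝ²) : det y x = -det x y := by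
  simp only [det_apply]; ring

theorem det_smul_eq_add (x y z : ℝ²) : det x z • y = det y z • x + det x y • z := by
  ext i
  fin_cases i <;>
    simp only [det_apply, PiLp.smul_apply, PiLp.add_apply, smul_eq_mul, Fin.zero_eta, Fin.mk_one] <;>
    ring

theorem exists_det_ne_zero {x : ℝ²} (hx : x ≠ 0) : ∃ z, det x z ≠ 0 := by
  by_contra! h
  have h₀ : x 0 = 0 := by simpa using h (EuclideanSpace.single 1 1)
  have h₁ : x 1 = 0 := by simpa using h (EuclideanSpace.single 0 1)
  exact hx (by ext i; fin_cases i <;> simp [h₀, h₁])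

theorem exists_eq_smul_of_det_eq_zero {x y : ℝ²} (hx : x ≠ 0) (h : det x y = 0) :
    ∃ c : ℝ, y = c • x := by
  obtain ⟨z, hz⟩ := exists_det_ne_zero hx
  have hcramer := det_smul_eq_add x y z
  rw [h, zero_smul, add_zero] at hcramer
  exact ⟨det y z / det x z, by rw [div_eq_inv_mul, mul_smul, ← hcramer, inv_smul_smul₀ hz]⟩

theorem exists_eq_smul_det_of_apply_eq_zero {f : ℝ² →L[ℝ] ℝ} {q : ℝ²} (hq : q ≠ 0)
    (hf : f q = 0) : ∃ s : ℝ, f = s • det q := by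
  obtain ⟨z, hz⟩ := exists_det_ne_zero hq
  refine ⟨f z / det q z, ContinuousLinearMap.ext fun x => ?_⟩
  have hcramer := congrArg f (det_smul_eq_add q x z)
  simp only [map_add, map_smul, hf, smul_eq_mul, mul_zero, zero_add] at hcramer
  rw [smul_apply, smul_eq_mul, div_mul_eq_mul_div, eq_div_iff hz]
  linarith

/-- Indexed by its own points, with `f i = F (p i)`, a separable point set is `Separated`. -/
structure Separated {ι : Type*} (p : ι → ℝ²) (f : ι → ℝ² →L[ℝ] ℝ) : Prop where
  apply_self_pos : ∀ i, 0 < f i (p i)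
  apply_nonpos : ∀ i j, i ≠ j → f i (p j) ≤ 0

namespace Separated

variable {ι : Type*} {p : ι → ℝ²} {f : ι → ℝ² →L[ℝ] ℝ}

theorem comp_embedding {κ : Type*} (h : Separated p f) (e : κ ↪ ι) : Separated (p ∘ e) (f ∘ e) :=
  ⟨fun i => h.apply_self_pos (e i), fun i j hij => h.apply_nonpos (e i) (e j) (e.injective.ne hij)⟩

theorem det_nonpos_of_det_nonneg (h : Separated p f) {u v w : ι} (huv : u ≠ v) (hvw : v ≠ w)
    (h₁ : 0 ≤ det (p u) (p v)) (h₂ : 0 ≤ det (p v) (p w)) : det (p u) (p w) ≤ 0 := by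
  have hcramer := congrArg (f v) (det_smul_eq_add (p u) (p v) (p w))
  simp only [map_add, map_smul, smul_eq_mul] at hcramer
  by_contra! h₃
  nlinarith [mul_pos h₃ (h.apply_self_pos v),
    mul_nonpos_of_nonneg_of_nonpos h₂ (h.apply_nonpos v u huv.symm),
    mul_nonpos_of_nonneg_of_nonpos h₁ (h.apply_nonpos v w hvw)]

theorem apply_eq_zero_of_det_eq_zero (h : Separated p f) {i j l : ι} (hij : i ≠ j)
    (hdet : det (p i) (p j) = 0) (hli : l ≠ i) (hlj : l ≠ j) : f l (p i) = 0 := by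
  have hpi : p i ≠ 0 := fun h0 => by simpa [h0] using h.apply_self_pos i
  obtain ⟨c, hc⟩ := exists_eq_smul_of_det_eq_zero hpi hdet
  -- `p j = c • p i` with `c < 0`, and `f l` is nonpositive at both `p i` and `c • p i`
  have hc_neg : c < 0 := by
    by_contra! hc_nonneg
    have hjj := h.apply_self_pos j
    rw [hc, map_smul, smul_eq_mul] at hjj
    nlinarith [h.apply_nonpos j i hij.symm]
  have hlj := h.apply_nonpos l j hlj
  rw [hc, map_smul, smul_eq_mul] at hlj
  nlinarith [h.apply_nonpos l i hli]

theorem mul_neg_of_eq_smul_det (h : Separated p f) {q : ℝ²} {i j : ι} {si sj : ℝ} (hij : i ≠ j)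
    (hi : f i = si • det q) (hj : f j = sj • det q) : si * sj < 0 := by
  have hii := h.apply_self_pos i
  have hjj := h.apply_self_pos j
  have hij := h.apply_nonpos i j hij
  rw [hi] at hii hij
  rw [hj] at hjj
  simp only [smul_apply, smul_eq_mul] at hii hjj hij
  have hsi : si ≠ 0 := by rintro rfl; simp at hii
  have hsj : sj ≠ 0 := by rintro rfl; simp at hjj
  have htj : det q (p j) ≠ 0 := by intro h0; simp [h0] at hjj
  refine lt_of_le_of_ne ?_ (mul_ne_zero hsi hsj)
  nlinarith [mul_nonpos_of_nonpos_of_nonneg hij hjj.le, sq_pos_of_ne_zero htj]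

theorem apply_ne_zero_of_apply_eq_zero (h : Separated p f) {q : ℝ²} (hq : q ≠ 0) {l m o : ι}
    (hlm : l ≠ m) (hlo : l ≠ o) (hmo : m ≠ o) (hl : f l q = 0) (hm : f m q = 0) :
    f o q ≠ 0 := by
  intro ho
  obtain ⟨sl, hsl⟩ := exists_eq_smul_det_of_apply_eq_zero hq hl
  obtain ⟨sm, hsm⟩ := exists_eq_smul_det_of_apply_eq_zero hq hm
  obtain ⟨so, hso⟩ := exists_eq_smul_det_of_apply_eq_zero hq ho
  nlinarith [mul_pos_of_neg_of_neg (h.mul_neg_of_eq_smul_det hlm hsl hsm)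
    (h.mul_neg_of_eq_smul_det hlo hsl hso), h.mul_neg_of_eq_smul_det hmo hsm hso, sq_nonneg sl]

theorem det_ne_zero {p : Fin 5 → ℝ²} {f : Fin 5 → ℝ² →L[ℝ] ℝ} (h : Separated p f) {i j : Fin 5}
    (hij : i ≠ j) : det (p i) (p j) ≠ 0 := by
  intro hdet
  have hpi : p i ≠ 0 := fun h0 => by simpa [h0] using h.apply_self_pos i
  have hvanish : ∀ l ∈ ({i, j}ᶜ : Finset (Fin 5)), f l (p i) = 0 := by
    intro l hl
    simp only [Finset.mem_compl, Finset.mem_insert, Finset.mem_singleton, not_or] at hl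
    exact h.apply_eq_zero_of_det_eq_zero hij hdet hl.1 hl.2
  obtain ⟨l, m, o, hlm, hlo, hmo, hrest⟩ :=
    Finset.card_eq_three.mp (show ({i, j}ᶜ : Finset (Fin 5)).card = 3 by
      rw [Finset.card_compl, Finset.card_pair hij]; rfl)
  exact h.apply_ne_zero_of_apply_eq_zero hpi hlm hlo hmo
    (hvanish l (by simp [hrest])) (hvanish m (by simp [hrest])) (hvanish o (by simp [hrest]))

theorem not_fin_five (p : Fin 5 → ℝ²) (f : Fin 5 → ℝ² →L[ℝ] ℝ) : ¬Separated p f := by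
  intro h
  have hne : ∀ {x y : Fin 4}, 0 < det (p x.castSucc) (p y.castSucc) → x.castSucc ≠ y.castSucc :=
    fun hxy e => hxy.ne' (e ▸ det_self _)
  obtain ⟨u, v, w, huv, hvw, huw⟩ :=
    Fin.exists_transitive_triple (fun x y : Fin 4 => 0 < det (p x.castSucc) (p y.castSucc))
      fun x y hxy => by
        rcases (h.det_ne_zero (Fin.castSucc_injective _ |>.ne hxy)).lt_or_gt with hlt | hgt
        · exact Or.inr (by rw [det_swap]; linarith)
        · exact Or.inl hgt
  exact (h.det_nonpos_of_det_nonneg (hne huv) (hne hvw) huv.le hvw.le).not_gt huw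

theorem enatCard_le_four (h : Separated p f) : ENat.card ι ≤ 4 := by
  by_contra! hι
  have h5 : (5 : ℕ∞) ≤ ENat.card ι := Order.add_one_le_of_lt hι
  obtain ⟨e, -⟩ := Fin.Embedding.exists_embedding_disjoint_range_of_add_le_ENat_card
    (s := (∅ : Set ι)) (n := 5) (by simpa using h5)
  exact not_fin_five _ _ (h.comp_embedding e)

end Separated

theorem exists_det_pos_of_zero_mem_interior {K : Set ℝ²} (h0 : (0 : ℝ²) ∈ interior K) :
    ∃ x ∈ K, ∃ y ∈ K, 0 < det x y := by
  obtain ⟨ε, hε, hball⟩ := Metric.mem_nhds_iff.mp (mem_interior_iff_mem_nhds.mp h0)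
  have hmem : ∀ i, EuclideanSpace.single i (ε / 2) ∈ K := fun i =>
    hball (by simp [abs_of_pos hε]; linarith)
  exact ⟨_, hmem 0, _, hmem 1, by simp; positivity⟩

theorem exists_conjugate_pair {K : Set ℝ²} {F : ℝ² → ℝ² →L[ℝ] ℝ} (hcomp : IsCompact K)
    (h0 : (0 : ℝ²) ∈ interior K)
    (hsmooth : ∀ p ∈ frontier K, ∀ g : ℝ² →L[ℝ] ℝ, ‖g‖ = 1 → (∀ x ∈ K, g x ≤ g p) → g = F p) :
    ∃ a ∈ frontier K, ∃ b ∈ frontier K, F a b = 0 ∧ F b a = 0 := by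
  obtain ⟨x, hx, y, hy, hxy⟩ := exists_det_pos_of_zero_mem_interior h0
  obtain ⟨⟨a, b⟩, ⟨ha, hb⟩, hmax⟩ := (hcomp.prod hcomp).exists_isMaxOn ⟨(x, y), hx, hy⟩
    det.continuous₂.continuousOn
  have hmax' : ∀ x ∈ K, ∀ y ∈ K, det x y ≤ det a b := fun x hx y hy =>
    hmax (Set.mk_mem_prod hx hy)
  have hdet : 0 < det a b := hxy.trans_le (hmax' x hx y hy)
  have hmax_a : ∀ x ∈ K, det.flip b x ≤ det.flip b a := fun x hx => hmax' x hx b hb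
  have hmax_b : ∀ y ∈ K, det a y ≤ det a b := fun y hy => hmax' a ha y hy
  have hne_a : det.flip b ≠ 0 := fun h => hdet.ne' (by
    simpa only [ContinuousLinearMap.flip_apply, zero_apply] using DFunLike.congr_fun h a)
  have hne_b : det a ≠ 0 := fun h => hdet.ne' (DFunLike.congr_fun h b)
  have hfa := (det.flip b).mem_frontier_of_forall_le hcomp.isClosed hne_a ha hmax_a
  have hfb := (det a).mem_frontier_of_forall_le hcomp.isClosed hne_b hb hmax_b
  refine ⟨a, hfa, b, hfb, ?_, ?_⟩
  · rw [supportFunctional_eq_inv_norm_smul hsmooth hfa hne_a hmax_a]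
    simp only [smul_apply, ContinuousLinearMap.flip_apply, det_self, smul_zero]
  · rw [supportFunctional_eq_inv_norm_smul hsmooth hfb hne_b hmax_b]
    simp only [smul_apply, det_self, smul_zero]

end Plane

open Plane in
/-- For every smooth o-symmetric convex domain `K` in `ℝ²` (smoothness encoded by the map
`F` assigning to each boundary point its unique unit-norm supporting functional), the
maximum cardinality of a separable point set on `∂K` is exactly `4`. A set `S ⊆ ∂K` is
separable if for all distinct `x, y ∈ S`, `x` is not in the cap
`C(y) = {z ∈ ∂K | 0 < F y z ∧ F y z ≤ F y y}`. -/
theorem max_separable_point_set_card_eq_four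
    (K : Set (EuclideanSpace ℝ (Fin 2)))
    (hconv : Convex ℝ K) (hcomp : IsCompact K) (hint : (interior K).Nonempty)
    (hsymm : K = -K)
    (F : EuclideanSpace ℝ (Fin 2) → (EuclideanSpace ℝ (Fin 2) →L[ℝ] ℝ))
    (hFnorm : ∀ p ∈ frontier K, ‖F p‖ = 1)
    (hFsupp : ∀ p ∈ frontier K, ∀ x ∈ K, F p x ≤ F p p)
    (hsmooth : ∀ p ∈ frontier K, ∀ g : EuclideanSpace ℝ (Fin 2) →L[ℝ] ℝ,
      ‖g‖ = 1 → (∀ x ∈ K, g x ≤ g p) → g = F p) :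
    (∃ S : Set (EuclideanSpace ℝ (Fin 2)), S ⊆ frontier K ∧
      (∀ x ∈ S, ∀ y ∈ S, x ≠ y →
        ¬ (x ∈ frontier K ∧ 0 < F y x ∧ F y x ≤ F y y)) ∧ S.ncard = 4) ∧
    (∀ S : Set (EuclideanSpace ℝ (Fin 2)), S ⊆ frontier K →
      (∀ x ∈ S, ∀ y ∈ S, x ≠ y →
        ¬ (x ∈ frontier K ∧ 0 < F y x ∧ F y x ≤ F y y)) →
      S.Finite ∧ S.ncard ≤ 4) := by
  have h0 : (0 : ℝ²) ∈ interior K := hconv.zero_mem_interior_of_eq_neg hint hsymm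
  have hpos : ∀ p ∈ frontier K, 0 < F p p := fun p hp =>
    (F p).apply_pos_of_forall_le h0 (norm_ne_zero_iff.mp (by simp [hFnorm p hp])) (hFsupp p hp)
  refine ⟨?_, fun S hS hsep => ?_⟩
  · obtain ⟨a, ha, b, hb, hab, hba⟩ := exists_conjugate_pair hcomp h0 hsmooth
    have hFa := supportFunctional_neg hsymm hFnorm hFsupp hsmooth ha
    have hFb := supportFunctional_neg hsymm hFnorm hFsupp hsmooth hb
    refine ⟨{a, -a, b, -b}, ?_, fun x hx y hy hxy hcap => ?_,
      ncard_conjugate_pair (hpos a ha) (hpos b hb) hab⟩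
    · simp only [Set.insert_subset_iff, Set.singleton_subset_iff]
      exact ⟨ha, neg_mem_frontier_of_eq_neg hsymm ha, hb, neg_mem_frontier_of_eq_neg hsymm hb⟩
    · exact hcap.2.1.not_ge
        (apply_nonpos_of_mem_conjugate_pair hFa hFb (hpos a ha) (hpos b hb) hab hba hx hy hxy)
  · rw [← Set.encard_le_coe_iff_finite_ncard_le]
    refine Separated.enatCard_le_four (p := ((↑) : S → ℝ²)) (f := fun x => F x)
      ⟨fun x => hpos x (hS x.2), fun x y hxy => not_lt.mp fun h => ?_⟩
    exact hsep y y.2 x x.2 (Subtype.coe_injective.ne hxy.symm)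
      ⟨hS y.2, h, hFsupp x (hS x.2) y (hcomp.isClosed.frontier_subset (hS y.2))⟩
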